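/- Let B = (e_n) be a quasi-greedy basis with constant C_qg of a p-Banach space X (0 < p ≤ 1). Then the restricted truncation operator is uniformly bounded with Γ_u ≤ C_qg²·η_p(C_qg), and the truncation operator is uniformly bounded with Γ_t ≤ C_qg·(1 + C_qg^p·η_p(C_qg)^p)^{1/p}, where η_p(u) = min_{0<t<1}(1 − t^p)^{−1/p}(1 − (1 + A_p^{−1}u^{−1}t)^{−p})^{−1/p} and A_p = (2^p − 1)^{−1/p}. -/

import Mathlib

set_option maxHeartbeats 800000


open Finset

noncomputable section

namespace GreedyQB

/-- The constant `A_p = (2^p - 1)^{-1/p}`. -/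
def Ap (p : ℝ) : ℝ := (2 ^ p - 1) ^ (-1 / p)

/-- The constant `B_p`, equal to `2^{1/p} A_p` for real scalars and `4^{1/p} A_p`
for complex scalars. -/
def Bp (𝕜 : Type*) [RCLike 𝕜] (p : ℝ) : ℝ :=
  if (RCLike.I : 𝕜) = 0 then 2 ^ (1 / p) * Ap p else 4 ^ (1 / p) * Ap p

/-- `η_p(u) = min_{0<t<1} (1-t^p)^{-1/p} (1-(1+A_p⁻¹ u⁻¹ t)^{-p})^{-1/p}`. -/
def eta (p u : ℝ) : ℝ :=
  sInf ((fun t : ℝ => (1 - t ^ p) ^ (-1 / p) *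
    (1 - (1 + (Ap p)⁻¹ * u⁻¹ * t) ^ (-p)) ^ (-1 / p)) '' Set.Ioo (0 : ℝ) 1)

variable {𝕜 X : Type*} [RCLike 𝕜] [AddCommGroup X] [Module 𝕜 X]

/-- A quasi-norm on a vector space `X` over `𝕜`. -/
structure IsQuasiNorm (𝕜 : Type*) [RCLike 𝕜] {X : Type*} [AddCommGroup X]
    [Module 𝕜 X] (q : X → ℝ) : Prop where
  pos : ∀ f : X, f ≠ 0 → 0 < q f
  hom : ∀ (t : 𝕜) (f : X), q (t • f) = ‖t‖ * q f
  quasi : ∃ κ : ℝ, 1 ≤ κ ∧ ∀ f g : X, q (f + g) ≤ κ * (q f + q g)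

/-- A `p`-norm on a vector space `X` over `𝕜`. -/
structure IsPNorm (𝕜 : Type*) [RCLike 𝕜] {X : Type*} [AddCommGroup X]
    [Module 𝕜 X] (p : ℝ) (q : X → ℝ) : Prop where
  pos : ∀ f : X, f ≠ 0 → 0 < q f
  hom : ∀ (t : 𝕜) (f : X), q (t • f) = ‖t‖ * q f
  ptri : ∀ f g : X, q (f + g) ^ p ≤ q f ^ p + q g ^ p

/-- `(e n)` is a (semi-normalized, total, biorthogonal) basis with coordinate
functionals `(c n)` on the space with quasi-norm `q`. -/
structure IsBasis (q : X → ℝ) (e : ℕ → X) (c : ℕ → X →ₗ[𝕜] 𝕜) : Prop where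
  biorth : ∀ n m, c n (e m) = if n = m then (1 : 𝕜) else 0
  total : ∀ f : X, (∀ n, c n f = 0) → f = 0
  semin : ∃ M : ℝ, ∀ n : ℕ, q (e n) ≤ M ∧ ∀ f : X, ‖c n f‖ ≤ M * q f

/-- The projection `P_A(f) = ∑_{n ∈ A} e_n^*(f) e_n`. -/
def proj (c : ℕ → X →ₗ[𝕜] 𝕜) (e : ℕ → X) (A : Finset ℕ) (f : X) : X :=
  ∑ n ∈ A, c n f • e n

/-- The partial sum operator `S_k`: projection onto the first `k` basis vectors. -/
def psum (c : ℕ → X →ₗ[𝕜] 𝕜) (e : ℕ → X) (k : ℕ) (f : X) : X :=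
  proj c e (Finset.range k) f

/-- The indicator sum `1_{εA} = ∑_{n ∈ A} ε_n e_n`. -/
def indSum (e : ℕ → X) (ε : ℕ → 𝕜) (A : Finset ℕ) : X :=
  ∑ n ∈ A, ε n • e n

/-- `ε` is a collection of signs on `A`. -/
def IsSign (ε : ℕ → 𝕜) (A : Finset ℕ) : Prop := ∀ n ∈ A, ‖ε n‖ = 1

/-- `A` is a greedy set of `f`: coefficients on `A` dominate those outside `A`. -/
def GreedySet (c : ℕ → X →ₗ[𝕜] 𝕜) (f : X) (A : Finset ℕ) : Prop :=
  ∀ n ∈ A, ∀ m ∉ A, ‖c m f‖ ≤ ‖c n f‖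

/-- The basis is `C`-partially-greedy:
`‖f - P_A f‖ ≤ C inf_{k ≤ |A|} ‖f - S_k f‖` for every greedy set `A` of `f`. -/
def PartiallyGreedy (q : X → ℝ) (e : ℕ → X) (c : ℕ → X →ₗ[𝕜] 𝕜) (C : ℝ) : Prop :=
  ∀ (f : X) (A : Finset ℕ), GreedySet c f A →
    ∀ k ≤ A.card, q (f - proj c e A f) ≤ C * q (f - psum c e k f)

/-- The basis is `C`-quasi-greedy. -/
def QuasiGreedy (q : X → ℝ) (e : ℕ → X) (c : ℕ → X →ₗ[𝕜] 𝕜) (C : ℝ) : Prop :=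
  ∀ (f : X) (A : Finset ℕ), GreedySet c f A → q (proj c e A f) ≤ C * q f

/-- The basis is `C`-quasi-greedy for largest coefficients. -/
def QGLC (q : X → ℝ) (e : ℕ → X) (c : ℕ → X →ₗ[𝕜] 𝕜) (C : ℝ) : Prop :=
  ∀ (A : Finset ℕ) (ε : ℕ → 𝕜) (f : X), IsSign ε A →
    (∀ n ∈ A, c n f = 0) → (∀ n, ‖c n f‖ ≤ 1) →
    q (indSum e ε A) ≤ C * q (f + indSum e ε A)

/-- The basis is `Δ`-partially-symmetric for largest coefficients. -/
def PSLC (q : X → ℝ) (e : ℕ → X) (c : ℕ → X →ₗ[𝕜] 𝕜) (Δ : ℝ) : Prop :=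
  ∀ (A B : Finset ℕ) (ε ε' : ℕ → 𝕜) (f : X),
    IsSign ε A → IsSign ε' B → A.card ≤ B.card →
    (∀ n, ‖c n f‖ ≤ 1) →
    (∀ a ∈ A, ∀ n, c n f ≠ 0 → a < n) →
    (∀ a ∈ A, ∀ b ∈ B, a < b) →
    (∀ b ∈ B, c b f = 0) →
    q (f + indSum e ε A) ≤ Δ * q (f + indSum e ε' B)

/-- The basis is `Δ`-super-conservative. -/
def SuperConservative (q : X → ℝ) (e : ℕ → X) (c : ℕ → X →ₗ[𝕜] 𝕜) (Δ : ℝ) : Prop :=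
  ∀ (A B : Finset ℕ) (ε ε' : ℕ → 𝕜), IsSign ε A → IsSign ε' B →
    A.card ≤ B.card → (∀ a ∈ A, ∀ b ∈ B, a < b) →
    q (indSum e ε A) ≤ Δ * q (indSum e ε' B)

/-- The basis is `Δ`-conservative. -/
def Conservative (q : X → ℝ) (e : ℕ → X) (Δ : ℝ) : Prop :=
  ∀ A B : Finset ℕ, A.card ≤ B.card → (∀ a ∈ A, ∀ b ∈ B, a < b) →
    q (∑ n ∈ A, e n) ≤ Δ * q (∑ n ∈ B, e n)

/-- The sign of a scalar, `sgn t = t / |t|` (with `sgn 0 = 1`). -/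
def sgn (𝕜 : Type*) [RCLike 𝕜] (t : 𝕜) : 𝕜 := if t = 0 then 1 else (‖t‖ : 𝕜)⁻¹ * t

/-- `min_{n ∈ A} |e_n^*(f)|`. -/
def minCoeff (c : ℕ → X →ₗ[𝕜] 𝕜) (f : X) (A : Finset ℕ) : ℝ :=
  sInf ((fun n => ‖c n f‖) '' (A : Set ℕ))

/-- The restricted truncation operator
`U(f,A) = (min_{n∈A} |e_n^*(f)|) ∑_{n∈A} sgn(e_n^*(f)) e_n`. -/
def restrTrunc (e : ℕ → X) (c : ℕ → X →ₗ[𝕜] 𝕜) (f : X) (A : Finset ℕ) : X :=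
  ((minCoeff c f A : ℝ) : 𝕜) • ∑ n ∈ A, sgn 𝕜 (c n f) • e n

/-- The truncation operator `T(f,A) = U(f,A) + P_{A^c}(f)`. -/
def trunc (e : ℕ → X) (c : ℕ → X →ₗ[𝕜] 𝕜) (f : X) (A : Finset ℕ) : X :=
  restrTrunc e c f A + (f - proj c e A f)

/-- `(k, z) ∈ D(f)`: `supp z` is finite, `k < min (supp z)`,
`supp z ∩ supp f = ∅`, `k ≤ |supp z|`, and
`max_{n ∈ supp f} |e_n^*(f)| ≤ min_{n ∈ supp z} |e_n^*(z)|`. -/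
def Dmem (c : ℕ → X →ₗ[𝕜] 𝕜) (f z : X) (k : ℕ) : Prop :=
  {n | c n z ≠ 0}.Finite ∧ (∀ n, c n z ≠ 0 → k ≤ n) ∧
  (∀ n, c n z ≠ 0 → c n f = 0) ∧ k ≤ {n | c n z ≠ 0}.ncard ∧
  (∀ n m, c m z ≠ 0 → ‖c n f‖ ≤ ‖c m z‖)

/-- The quantity `‖f‖_a = inf { ‖f - S_k f + z‖ : (k,z) ∈ D(f) }`. -/
def qa (q : X → ℝ) (e : ℕ → X) (c : ℕ → X →ₗ[𝕜] 𝕜) (f : X) : ℝ :=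
  sInf {y : ℝ | ∃ (z : X) (k : ℕ), Dmem c f z k ∧ y = q (f - psum c e k f + z)}

variable (q : X → ℝ) (e : ℕ → X) (c : ℕ → X →ₗ[𝕜] 𝕜)



/-! ### Auxiliary lemmas for Statement 19 -/

section Stmt19Aux

variable {p Cqg : ℝ}

private lemma q_zero (hq : IsPNorm 𝕜 p q) : q 0 = 0 := by
  have h := hq.hom (0 : 𝕜) (0 : X)
  simpa using h

private lemma q_nonneg (hq : IsPNorm 𝕜 p q) (f : X) : 0 ≤ q f := by
  rcases eq_or_ne f 0 with h | h
  · rw [h, q_zero q hq]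
  · exact (hq.pos f h).le

private lemma q_neg (hq : IsPNorm 𝕜 p q) (f : X) : q (-f) = q f := by
  have h := hq.hom (-1 : 𝕜) f
  simpa using h

private lemma q_smul_real (hq : IsPNorm 𝕜 p q) {r : ℝ} (hr : 0 ≤ r) (f : X) :
    q ((r : 𝕜) • f) = r * q f := by
  rw [hq.hom, RCLike.norm_ofReal, abs_of_nonneg hr]

private lemma q_sub_le (hp : 0 < p) (hq : IsPNorm 𝕜 p q) (f g : X) :
    q (f - g) ^ p ≤ q f ^ p + q g ^ p := by
  rw [sub_eq_add_neg]
  refine le_trans (hq.ptri f (-g)) ?_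
  rw [q_neg q hq g]

private lemma q_sum_le (hp : 0 < p) (hq : IsPNorm 𝕜 p q) (S : Finset ℕ) (g : ℕ → X) :
    q (∑ n ∈ S, g n) ^ p ≤ ∑ n ∈ S, q (g n) ^ p := by
  classical
  induction S using Finset.induction_on with
  | empty => simp [q_zero q hq, Real.zero_rpow hp.ne']
  | insert b s hx ih =>
      rw [Finset.sum_insert hx, Finset.sum_insert hx]
      exact le_trans (hq.ptri _ _) (by linarith)

private lemma norm_sgn (t : 𝕜) : ‖sgn 𝕜 t‖ = 1 := by
  unfold sgn
  split_ifs with h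
  · simp
  · rw [norm_mul, norm_inv, RCLike.norm_ofReal, abs_of_nonneg (norm_nonneg t)]
    have ht : ‖t‖ ≠ 0 := norm_ne_zero_iff.mpr h
    field_simp

private lemma ofReal_norm_mul_sgn (t : 𝕜) : ((‖t‖ : ℝ) : 𝕜) * sgn 𝕜 t = t := by
  unfold sgn
  split_ifs with h
  · simp [h]
  · have ht : ((‖t‖ : ℝ) : 𝕜) ≠ 0 := by
      simpa using norm_ne_zero_iff.mpr h
    field_simp

private lemma coeff_sum (hb : IsBasis q e c) (S : Finset ℕ) (v : ℕ → 𝕜) (m : ℕ) :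
    c m (∑ n ∈ S, v n • e n) = if m ∈ S then v m else 0 := by
  classical
  rw [map_sum]
  have h : ∀ n ∈ S, c m (v n • e n) = if m = n then v n else 0 := by
    intro n _
    rw [LinearMap.map_smul, hb.biorth m n, smul_eq_mul, mul_ite, mul_one, mul_zero]
  rw [Finset.sum_congr rfl h, Finset.sum_ite_eq]

private lemma one_le_Cqg (hp : 0 < p) (hq : IsPNorm 𝕜 p q) (hb : IsBasis q e c)
    (hqg : QuasiGreedy q e c Cqg) : 1 ≤ Cqg := by
  have he0 : e 0 ≠ 0 := by
    intro h
    have hb0 := hb.biorth 0 0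
    rw [h, map_zero] at hb0
    simp at hb0
  have hpos := hq.pos (e 0) he0
  have hg : GreedySet c (e 0) {0} := by
    intro n hn m hm
    simp only [Finset.mem_singleton] at hn hm
    have h1 : c m (e 0) = 0 := by rw [hb.biorth]; simp [hm]
    rw [h1]
    simp
  have hle := hqg (e 0) {0} hg
  have hproj : proj c e {0} (e 0) = e 0 := by
    simp [proj, hb.biorth]
  rw [hproj] at hle
  nlinarith

private lemma rpow_le_rpow_rev {a b : ℝ} (hp : 0 < p) (ha : 0 ≤ a) (hb : 0 ≤ b)
    (h : a ^ p ≤ b ^ p) : a ≤ b := (Real.rpow_le_rpow_iff ha hb hp).mp h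

private lemma pow_rpow_comm {x : ℝ} (hx : 0 ≤ x) (n : ℕ) (y : ℝ) :
    (x ^ n) ^ y = (x ^ y) ^ n := by
  rw [← Real.rpow_natCast x n, ← Real.rpow_natCast (x ^ y) n, ← Real.rpow_mul hx,
    ← Real.rpow_mul hx, mul_comm]

private lemma geom_tail {r : ℝ} (h0 : 0 ≤ r) (h1 : r < 1) (K : ℕ) :
    ∑ k ∈ Finset.range K, r ^ (k + 1) ≤ r / (1 - r) := by
  have hr1 : (0:ℝ) < 1 - r := by linarith
  have hsum : ∑ k ∈ Finset.range K, r ^ (k + 1) = r * ∑ k ∈ Finset.range K, r ^ k := by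
    rw [Finset.mul_sum]
    exact Finset.sum_congr rfl fun k _ => by rw [pow_succ]; ring
  have hmul := geom_sum_mul r K
  have hS : (∑ k ∈ Finset.range K, r ^ k) ≤ 1 / (1 - r) := by
    rw [le_div_iff₀ hr1]
    nlinarith [pow_nonneg h0 K]
  rw [hsum, div_eq_mul_inv, ← one_div]
  exact mul_le_mul_of_nonneg_left hS h0

private lemma indicator_subset_bound (hp : 0 < p) (hq : IsPNorm 𝕜 p q)
    (hb : IsBasis q e c) (hqg : QuasiGreedy q e c Cqg) (hC : 1 ≤ Cqg)
    {A F : Finset ℕ} (hFA : F ⊆ A) {ε : ℕ → 𝕜} (hε : ∀ n ∈ A, ‖ε n‖ = 1) :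
    q (∑ n ∈ F, ε n • e n) ≤ Cqg * q (∑ n ∈ A, ε n • e n) := by
  classical
  have hqF : 0 ≤ q (∑ n ∈ F, ε n • e n) := q_nonneg q hq _
  have hqA : 0 ≤ q (∑ n ∈ A, ε n • e n) := q_nonneg q hq _
  have hC0 : (0:ℝ) < Cqg := lt_of_lt_of_le one_pos hC
  have key : ∀ d : ℝ, 0 < d →
      q (∑ n ∈ F, ε n • e n) ^ p ≤ Cqg ^ p * q (∑ n ∈ A, ε n • e n) ^ p
        + d ^ p * (Cqg ^ p * q (∑ n ∈ F, ε n • e n) ^ p) := by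
    intro d hd
    set h : X := (∑ n ∈ A, ε n • e n) + ((d : ℝ) : 𝕜) • (∑ n ∈ F, ε n • e n) with hh
    have hch : ∀ m, c m h =
        (if m ∈ A then ε m else 0) + ((d : ℝ) : 𝕜) * (if m ∈ F then ε m else 0) := by
      intro m
      rw [hh, map_add, LinearMap.map_smul, coeff_sum q e c hb, coeff_sum q e c hb, smul_eq_mul]
    have hgr : GreedySet c h F := by
      intro n hn m hm
      have hnA := hFA hn
      have h1 : c n h = ((1 + d : ℝ) : 𝕜) * ε n := by
        rw [hch, if_pos hnA, if_pos hn]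
        push_cast
        ring
      have hn1 : ‖c n h‖ = 1 + d := by
        rw [h1, norm_mul, RCLike.norm_ofReal, hε n hnA, abs_of_pos (by linarith), mul_one]
      rw [hn1, hch m, if_neg hm, mul_zero, add_zero]
      by_cases hmA : m ∈ A
      · rw [if_pos hmA, hε m hmA]; linarith
      · rw [if_neg hmA, norm_zero]; linarith
    have hproj : proj c e F h = ((1 + d : ℝ) : 𝕜) • (∑ n ∈ F, ε n • e n) := by
      rw [proj, Finset.smul_sum]
      refine Finset.sum_congr rfl fun n hn => ?_
      rw [hch, if_pos (hFA hn), if_pos hn, smul_smul]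
      congr 1
      push_cast
      ring
    have hq1 := hqg h F hgr
    rw [hproj, q_smul_real q hq (by linarith : (0:ℝ) ≤ 1 + d)] at hq1
    have hq3 : q (∑ n ∈ F, ε n • e n) ≤ Cqg * q h := by nlinarith
    have hq4 : q h ^ p ≤ q (∑ n ∈ A, ε n • e n) ^ p
        + d ^ p * q (∑ n ∈ F, ε n • e n) ^ p := by
      have hpt := hq.ptri (∑ n ∈ A, ε n • e n) (((d : ℝ) : 𝕜) • ∑ n ∈ F, ε n • e n)
      rw [q_smul_real q hq hd.le, Real.mul_rpow hd.le hqF] at hpt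
      exact hpt
    have hq5 : q (∑ n ∈ F, ε n • e n) ^ p ≤ (Cqg * q h) ^ p :=
      Real.rpow_le_rpow hqF hq3 hp.le
    rw [Real.mul_rpow hC0.le (q_nonneg q hq h)] at hq5
    have hCp : 0 ≤ Cqg ^ p := Real.rpow_nonneg hC0.le p
    calc q (∑ n ∈ F, ε n • e n) ^ p ≤ Cqg ^ p * q h ^ p := hq5
      _ ≤ Cqg ^ p * (q (∑ n ∈ A, ε n • e n) ^ p + d ^ p * q (∑ n ∈ F, ε n • e n) ^ p) :=
          mul_le_mul_of_nonneg_left hq4 hCp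
      _ = Cqg ^ p * q (∑ n ∈ A, ε n • e n) ^ p
          + d ^ p * (Cqg ^ p * q (∑ n ∈ F, ε n • e n) ^ p) := by ring
  have main : q (∑ n ∈ F, ε n • e n) ^ p ≤ Cqg ^ p * q (∑ n ∈ A, ε n • e n) ^ p := by
    refine le_of_forall_pos_le_add fun eps heps => ?_
    have hZ0 : 0 ≤ Cqg ^ p * q (∑ n ∈ F, ε n • e n) ^ p :=
      mul_nonneg (Real.rpow_nonneg hC0.le p) (Real.rpow_nonneg hqF p)
    set Z := Cqg ^ p * q (∑ n ∈ F, ε n • e n) ^ p with hZ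
    set d := (eps / (Z + 1)) ^ (1/p) with hd
    have hd0 : 0 < d := Real.rpow_pos_of_pos (by positivity) _
    have hdp : d ^ p = eps / (Z + 1) := by
      rw [hd, ← Real.rpow_mul (by positivity), one_div, inv_mul_cancel₀ hp.ne', Real.rpow_one]
    have hk := key d hd0
    rw [hdp] at hk
    have hfin : eps / (Z + 1) * Z ≤ eps := by
      rw [div_mul_eq_mul_div, div_le_iff₀ (by positivity)]
      nlinarith
    linarith
  refine rpow_le_rpow_rev hp hqF (by positivity) ?_
  rwa [Real.mul_rpow hC0.le hqA]

private lemma multiplier_bound_aux (hp : 0 < p) (hq : IsPNorm 𝕜 p q)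
    {A : Finset ℕ} {ε : ℕ → 𝕜} {M Xi : ℝ}
    (hM : ∀ n, q (e n) ≤ M)
    (hXi : ∀ F ⊆ A, q (∑ n ∈ F, ε n • e n) ≤ Xi)
    (hε : ∀ n ∈ A, ‖ε n‖ = 1) :
    ∀ (K : ℕ) (β : ℝ) (co : ℕ → ℝ), 0 ≤ β → (∀ n ∈ A, 0 ≤ co n ∧ co n ≤ β) →
      q (∑ n ∈ A, ((co n : ℝ) : 𝕜) • (ε n • e n)) ^ p ≤
        (∑ k ∈ Finset.range K, (β / 2 ^ (k + 1)) ^ p) * Xi ^ p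
          + (A.card : ℝ) * ((β / 2 ^ K) ^ p * M ^ p) := by
  classical
  have hM0 : 0 ≤ M := le_trans (q_nonneg q hq (e 0)) (hM 0)
  have hXi0 : 0 ≤ Xi :=
    le_trans (q_nonneg q hq (∑ n ∈ (∅ : Finset ℕ), ε n • e n)) (hXi ∅ (Finset.empty_subset A))
  intro K
  induction K with
  | zero =>
      intro β co hβ hco
      simp only [Finset.range_zero, Finset.sum_empty, zero_mul, pow_zero, div_one, zero_add]
      refine le_trans (q_sum_le q hp hq A _) ?_
      have hterm : ∀ n ∈ A, q (((co n : ℝ) : 𝕜) • (ε n • e n)) ^ p ≤ β ^ p * M ^ p := by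
        intro n hn
        rw [q_smul_real q hq (hco n hn).1, hq.hom, hε n hn, one_mul]
        rw [← Real.mul_rpow hβ hM0]
        refine Real.rpow_le_rpow (mul_nonneg (hco n hn).1 (q_nonneg q hq _)) ?_ hp.le
        exact mul_le_mul (hco n hn).2 (hM n) (q_nonneg q hq _) hβ
      refine le_trans (Finset.sum_le_sum hterm) ?_
      rw [Finset.sum_const, nsmul_eq_mul]
  | succ K ih =>
      intro β co hβ hco
      set F : Finset ℕ := A.filter (fun n => β / 2 ≤ co n) with hF
      set co' : ℕ → ℝ := fun n => if β / 2 ≤ co n then co n - β / 2 else co n with hco'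
      have hβ2 : (0:ℝ) ≤ β / 2 := by linarith
      have hsplit : ∑ n ∈ A, ((co n : ℝ) : 𝕜) • (ε n • e n)
          = ((β / 2 : ℝ) : 𝕜) • (∑ n ∈ F, ε n • e n)
            + ∑ n ∈ A, ((co' n : ℝ) : 𝕜) • (ε n • e n) := by
        rw [Finset.smul_sum, hF, Finset.sum_filter, ← Finset.sum_add_distrib]
        refine Finset.sum_congr rfl fun n hn => ?_
        by_cases hn2 : β / 2 ≤ co n
        · rw [if_pos hn2]
          have hco'n : co' n = co n - β / 2 := by rw [hco']; simp [hn2]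
          rw [hco'n, ← add_smul]
          congr 1
          push_cast
          ring
        · rw [if_neg hn2]
          have hco'n : co' n = co n := by rw [hco']; simp [hn2]
          rw [hco'n, zero_add]
      have hco'bound : ∀ n ∈ A, 0 ≤ co' n ∧ co' n ≤ β / 2 := by
        intro n hn
        rw [hco']
        by_cases hn2 : β / 2 ≤ co n
        · simp only [hn2, if_true]
          constructor
          · linarith
          · linarith [(hco n hn).2]
        · simp only [hn2, if_false]
          push_neg at hn2
          exact ⟨(hco n hn).1, hn2.le⟩
      have h1 : q (((β / 2 : ℝ) : 𝕜) • (∑ n ∈ F, ε n • e n)) ^ p ≤ (β / 2) ^ p * Xi ^ p := by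
        rw [q_smul_real q hq hβ2, ← Real.mul_rpow hβ2 hXi0]
        refine Real.rpow_le_rpow (mul_nonneg hβ2 (q_nonneg q hq _)) ?_ hp.le
        exact mul_le_mul_of_nonneg_left (hXi F (by rw [hF]; exact Finset.filter_subset _ _)) hβ2
      have h2 := ih (β / 2) co' hβ2 hco'bound
      have hcard : (β / 2 / 2 ^ K) ^ p = (β / 2 ^ (K + 1)) ^ p := by
        congr 1
        rw [div_div]
        congr 1
        ring
      rw [hcard] at h2
      have hptri : q (∑ n ∈ A, ((co n : ℝ) : 𝕜) • (ε n • e n)) ^ p ≤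
          q (((β / 2 : ℝ) : 𝕜) • (∑ n ∈ F, ε n • e n)) ^ p
            + q (∑ n ∈ A, ((co' n : ℝ) : 𝕜) • (ε n • e n)) ^ p := by
        rw [hsplit]
        exact hq.ptri _ _
      have hser : (∑ k ∈ Finset.range (K + 1), (β / 2 ^ (k + 1)) ^ p)
          = (∑ k ∈ Finset.range K, (β / 2 / 2 ^ (k + 1)) ^ p) + (β / 2) ^ p := by
        rw [Finset.sum_range_succ']
        congr 1
        · refine Finset.sum_congr rfl fun k _ => ?_
          congr 1
          rw [div_div]
          congr 1
          ring
        · norm_num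
      rw [hser, add_mul]
      linarith

private lemma multiplier_bound (hp : 0 < p) (hq : IsPNorm 𝕜 p q)
    {A : Finset ℕ} {ε : ℕ → 𝕜} {M Xi : ℝ}
    (hM : ∀ n, q (e n) ≤ M)
    (hXi : ∀ F ⊆ A, q (∑ n ∈ F, ε n • e n) ≤ Xi)
    (hε : ∀ n ∈ A, ‖ε n‖ = 1)
    {β : ℝ} {co : ℕ → ℝ} (hβ : 0 ≤ β) (hco : ∀ n ∈ A, 0 ≤ co n ∧ co n ≤ β) :
    q (∑ n ∈ A, ((co n : ℝ) : 𝕜) • (ε n • e n)) ^ p ≤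
      β ^ p * ((2:ℝ) ^ p - 1)⁻¹ * Xi ^ p := by
  classical
  have hM0 : 0 ≤ M := le_trans (q_nonneg q hq (e 0)) (hM 0)
  have hXi0 : 0 ≤ Xi :=
    le_trans (q_nonneg q hq (∑ n ∈ (∅ : Finset ℕ), ε n • e n)) (hXi ∅ (Finset.empty_subset A))
  have h2p : (1:ℝ) < 2 ^ p := by
    calc (1:ℝ) = 1 ^ p := (Real.one_rpow p).symm
    _ < 2 ^ p := Real.rpow_lt_rpow (by norm_num) (by norm_num) hp
  have h2p0 : (0:ℝ) < 2 ^ p := by linarith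
  set r : ℝ := ((2:ℝ) ^ p)⁻¹ with hr
  have hr0 : 0 < r := by rw [hr]; positivity
  have hr1 : r < 1 := by
    rw [hr]
    exact inv_lt_one_of_one_lt₀ h2p
  have hterm : ∀ k : ℕ, (β / 2 ^ k) ^ p = β ^ p * r ^ k := by
    intro k
    rw [Real.div_rpow hβ (by positivity), pow_rpow_comm (by norm_num : (0:ℝ) ≤ 2) k p,
      div_eq_mul_inv, hr, inv_pow]
  have hrdiv : r / (1 - r) = ((2:ℝ) ^ p - 1)⁻¹ := by
    have h21 : ((2:ℝ) ^ p - 1) ≠ 0 := by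
      have : (0:ℝ) < 2 ^ p - 1 := by linarith
      exact this.ne'
    have h2ne : ((2:ℝ) ^ p) ≠ 0 := by positivity
    have hr1' : (1:ℝ) - ((2:ℝ) ^ p)⁻¹ = ((2:ℝ) ^ p - 1) * ((2:ℝ) ^ p)⁻¹ := by
      field_simp
    rw [hr, hr1', div_mul_eq_div_div_swap, div_self (inv_ne_zero h2ne), one_div]
  have hsum : ∀ K : ℕ, (∑ k ∈ Finset.range K, (β / 2 ^ (k + 1)) ^ p)
      ≤ β ^ p * ((2:ℝ) ^ p - 1)⁻¹ := by
    intro K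
    have : ∀ k ∈ Finset.range K, (β / 2 ^ (k + 1)) ^ p = β ^ p * r ^ (k+1) := fun k _ => hterm (k+1)
    rw [Finset.sum_congr rfl this, ← Finset.mul_sum]
    calc β ^ p * ∑ k ∈ Finset.range K, r ^ (k+1)
        ≤ β ^ p * (r / (1 - r)) :=
          mul_le_mul_of_nonneg_left (geom_tail hr0.le hr1 K) (Real.rpow_nonneg hβ p)
      _ = β ^ p * ((2:ℝ) ^ p - 1)⁻¹ := by rw [hrdiv]
  refine le_of_forall_pos_le_add fun eps heps => ?_
  set D : ℝ := (A.card : ℝ) * (β ^ p * M ^ p) with hD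
  have hD0 : 0 ≤ D := by positivity
  obtain ⟨K, hK⟩ := exists_pow_lt_of_lt_one (x := eps / (D + 1)) (by positivity) hr1
  have haux := multiplier_bound_aux q e hp hq hM hXi hε K β co hβ hco
  have htail : (A.card : ℝ) * ((β / 2 ^ K) ^ p * M ^ p) ≤ eps := by
    rw [hterm K]
    have : (A.card : ℝ) * (β ^ p * r ^ K * M ^ p) = D * r ^ K := by rw [hD]; ring
    rw [this]
    calc D * r ^ K ≤ D * (eps / (D + 1)) :=
          mul_le_mul_of_nonneg_left hK.le hD0
      _ = eps * (D / (D + 1)) := by ring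
      _ ≤ eps * 1 := by
          refine mul_le_mul_of_nonneg_left ?_ heps.le
          rw [div_le_one (by positivity)]
          linarith
      _ = eps := mul_one eps
  have hXip : 0 ≤ Xi ^ p := Real.rpow_nonneg hXi0 p
  have := mul_le_mul_of_nonneg_right (hsum K) hXip
  linarith

private lemma per_t (hp : 0 < p) (hp1 : p ≤ 1) (hq : IsPNorm 𝕜 p q) (hb : IsBasis q e c)
    (hqg : QuasiGreedy q e c Cqg) (hC : 1 ≤ Cqg)
    (f : X) (A : Finset ℕ) (hGA : GreedySet c f A) (hf1 : q f ≤ 1)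
    {t : ℝ} (ht0 : 0 < t) (ht1 : t < 1) :
    q (restrTrunc e c f A) ≤ Cqg *
        ((1 - t ^ p) ^ (-1 / p) * (1 - (1 + (Ap p)⁻¹ * Cqg⁻¹ * t) ^ (-p)) ^ (-1 / p)) ∧
      q (proj c e A f - restrTrunc e c f A) ≤ Cqg * Cqg *
        ((1 - t ^ p) ^ (-1 / p) * (1 - (1 + (Ap p)⁻¹ * Cqg⁻¹ * t) ^ (-p)) ^ (-1 / p)) := by
  classical
  obtain ⟨M, hMall⟩ := hb.semin
  have hM : ∀ n, q (e n) ≤ M := fun n => (hMall n).1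
  have hC0 : (0:ℝ) < Cqg := lt_of_lt_of_le one_pos hC
  have hexp : -1 / p ≤ 0 := by
    rw [neg_div]
    exact neg_nonpos_of_nonneg (by positivity)
  have h2p : (1:ℝ) < 2 ^ p := by
    calc (1:ℝ) = 1 ^ p := (Real.one_rpow p).symm
    _ < 2 ^ p := Real.rpow_lt_rpow (by norm_num) (by norm_num) hp
  have h2p0 : (0:ℝ) < 2 ^ p - 1 := by linarith
  have h2p1 : (2:ℝ) ^ p - 1 ≤ 1 := by
    have h := Real.rpow_le_rpow_of_exponent_le (by norm_num : (1:ℝ) ≤ 2) hp1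
    rw [Real.rpow_one] at h
    linarith
  have hAp0 : 0 < Ap p := Real.rpow_pos_of_pos h2p0 _
  have hAp1 : 1 ≤ Ap p :=
    Real.one_le_rpow_of_pos_of_le_one_of_nonpos h2p0 h2p1 hexp
  have hApp : Ap p ^ p = ((2:ℝ) ^ p - 1)⁻¹ := by
    rw [Ap, ← Real.rpow_mul h2p0.le]
    rw [show -1 / p * p = -1 by field_simp, Real.rpow_neg_one]
  set θ := (Ap p)⁻¹ * Cqg⁻¹ * t with hθdef
  have hθ0 : 0 < θ := by positivity
  have hθt : θ ≤ t := by
    rw [hθdef]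
    have h1 : (Ap p)⁻¹ ≤ 1 := inv_le_one_of_one_le₀ hAp1
    have h2 : Cqg⁻¹ ≤ 1 := inv_le_one_of_one_le₀ hC
    calc (Ap p)⁻¹ * Cqg⁻¹ * t ≤ 1 * 1 * t := by
          apply mul_le_mul_of_nonneg_right _ ht0.le
          exact mul_le_mul h1 h2 (by positivity) (by norm_num)
      _ = t := by ring
  have hθ1 : θ < 1 := lt_of_le_of_lt hθt ht1
  have h1θ : (1:ℝ) < 1 + θ := by linarith
  set δ := (1 + θ)⁻¹ with hδdef
  have hδ0 : 0 < δ := by positivity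
  have hδ1 : δ < 1 := by rw [hδdef]; exact inv_lt_one_of_one_lt₀ h1θ
  have hδθ : (1 + θ) * δ = 1 := mul_inv_cancel₀ (by positivity)
  set Dp := (1 + θ) ^ (-p) with hDpdef
  have hδp : δ ^ p = Dp := by
    rw [hδdef, hDpdef, Real.inv_rpow (by positivity), ← Real.rpow_neg (by positivity)]
  have hDp0 : 0 < Dp := Real.rpow_pos_of_pos (by positivity) _
  have hDp1 : Dp < 1 := Real.rpow_lt_one_of_one_lt_of_neg h1θ (by linarith)
  set Tp := t ^ p with hTpdef
  have hTp0 : 0 < Tp := Real.rpow_pos_of_pos ht0 _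
  have hTp1 : Tp < 1 := Real.rpow_lt_one ht0.le ht1 hp
  have h1T : (0:ℝ) < 1 - Tp := by linarith
  have h1D : (0:ℝ) < 1 - Dp := by linarith
  set H := (1 - Tp) ^ (-1 / p) * (1 - Dp) ^ (-1 / p) with hHdef
  have hHp : H ^ p = (1 - Tp)⁻¹ * (1 - Dp)⁻¹ := by
    rw [hHdef, Real.mul_rpow (Real.rpow_nonneg h1T.le _) (Real.rpow_nonneg h1D.le _),
      ← Real.rpow_mul h1T.le, ← Real.rpow_mul h1D.le,
      show -1 / p * p = -1 by field_simp, Real.rpow_neg_one, Real.rpow_neg_one]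
  have hH0 : 0 < H := by
    rw [hHdef]
    exact mul_pos (Real.rpow_pos_of_pos h1T _) (Real.rpow_pos_of_pos h1D _)
  have hH1 : 1 ≤ H := by
    have a1 : 1 ≤ (1 - Tp) ^ (-1 / p) :=
      Real.one_le_rpow_of_pos_of_le_one_of_nonpos h1T (by linarith) hexp
    have a2 : 1 ≤ (1 - Dp) ^ (-1 / p) :=
      Real.one_le_rpow_of_pos_of_le_one_of_nonpos h1D (by linarith) hexp
    rw [hHdef]
    calc (1:ℝ) = 1 * 1 := by norm_num
      _ ≤ (1 - Tp) ^ (-1 / p) * (1 - Dp) ^ (-1 / p) :=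
          mul_le_mul a1 a2 zero_le_one (le_trans zero_le_one a1)
  set s := minCoeff c f A with hsdef
  have hs0 : 0 ≤ s := by
    rw [hsdef, minCoeff]
    exact Real.sInf_nonneg (by rintro x ⟨n, hn, rfl⟩; exact norm_nonneg _)
  rcases eq_or_lt_of_le hs0 with hs | hs
  · -- degenerate case s = 0
    have hU : restrTrunc e c f A = 0 := by
      rw [restrTrunc, ← hsdef, ← hs]
      simp
    constructor
    · rw [hU, q_zero q hq]
      exact mul_nonneg hC0.le hH0.le
    · rw [hU, sub_zero]
      have hle := hqg f A hGA
      have hq0 := q_nonneg q hq f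
      calc q (proj c e A f) ≤ Cqg * q f := hle
        _ ≤ Cqg * 1 := mul_le_mul_of_nonneg_left hf1 hC0.le
        _ = Cqg := mul_one _
        _ ≤ Cqg * Cqg * H := by
            have h1 : Cqg * 1 * 1 ≤ Cqg * Cqg * H :=
              mul_le_mul (mul_le_mul le_rfl hC zero_le_one hC0.le) hH1 zero_le_one
                (by positivity)
            simpa using h1
  · -- main case 0 < s
    have hAne : A.Nonempty := by
      by_contra hA
      rw [Finset.not_nonempty_iff_eq_empty] at hA
      rw [hsdef, minCoeff, hA] at hs
      simp [Real.sInf_empty] at hs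
    have hsle : ∀ n ∈ A, s ≤ ‖c n f‖ := by
      intro n hn
      rw [hsdef, minCoeff]
      exact csInf_le ((A.finite_toSet.image _).bddBelow) ⟨n, hn, rfl⟩
    obtain ⟨n₀, hn₀A, hn₀⟩ : ∃ n ∈ A, ‖c n f‖ = s := by
      have hne : ((fun n => ‖c n f‖) '' (A : Set ℕ)).Nonempty :=
        (Set.Nonempty.image _ (by exact_mod_cast hAne))
      have hmem := Set.Nonempty.csInf_mem hne (A.finite_toSet.image _)
      obtain ⟨n, hn, hval⟩ := hmem
      exact ⟨n, hn, hval⟩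
    have hout : ∀ m, m ∉ A → ‖c m f‖ ≤ s := fun m hm => by
      rw [← hn₀]; exact hGA n₀ hn₀A m hm
    -- the level function
    set jn : ℕ → ℕ := fun n => ⌊Real.logb (1 + θ) (‖c n f‖ / s)⌋₊ with hjdef
    have hjlow : ∀ n ∈ A, s * (1 + θ) ^ jn n ≤ ‖c n f‖ := by
      intro n hn
      have hx0 : 0 < ‖c n f‖ / s := div_pos (lt_of_lt_of_le hs (hsle n hn)) hs
      have hx1 : 1 ≤ ‖c n f‖ / s := (one_le_div hs).mpr (hsle n hn)
      have hlb0 : 0 ≤ Real.logb (1 + θ) (‖c n f‖ / s) := Real.logb_nonneg h1θ hx1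
      have hkey : ((1 + θ):ℝ) ^ jn n ≤ ‖c n f‖ / s := by
        calc ((1 + θ):ℝ) ^ jn n = (1 + θ) ^ ((jn n : ℕ) : ℝ) := (Real.rpow_natCast _ _).symm
          _ ≤ (1 + θ) ^ Real.logb (1 + θ) (‖c n f‖ / s) :=
              Real.rpow_le_rpow_of_exponent_le h1θ.le (Nat.floor_le hlb0)
          _ = ‖c n f‖ / s := Real.rpow_logb (by positivity) (ne_of_gt h1θ) hx0
      calc s * (1 + θ) ^ jn n ≤ s * (‖c n f‖ / s) :=
            mul_le_mul_of_nonneg_left hkey hs.le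
        _ = ‖c n f‖ := by rw [mul_comm]; exact div_mul_cancel₀ _ hs.ne'
    have hjhigh : ∀ n ∈ A, ‖c n f‖ < s * (1 + θ) ^ (jn n + 1) := by
      intro n hn
      have hx0 : 0 < ‖c n f‖ / s := div_pos (lt_of_lt_of_le hs (hsle n hn)) hs
      have hkey : ‖c n f‖ / s < ((1 + θ):ℝ) ^ (jn n + 1) := by
        calc ‖c n f‖ / s = (1 + θ) ^ Real.logb (1 + θ) (‖c n f‖ / s) :=
              (Real.rpow_logb (by positivity) (ne_of_gt h1θ) hx0).symm
          _ < (1 + θ) ^ (((jn n + 1 : ℕ)) : ℝ) := by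
              apply Real.rpow_lt_rpow_of_exponent_lt h1θ
              push_cast
              exact Nat.lt_floor_add_one _
          _ = ((1 + θ):ℝ) ^ (jn n + 1) := Real.rpow_natCast _ _
      calc ‖c n f‖ = s * (‖c n f‖ / s) := by
            rw [mul_comm, div_mul_cancel₀ _ hs.ne']
        _ < s * (1 + θ) ^ (jn n + 1) := mul_lt_mul_of_pos_left hkey hs
    -- the level sets
    set B : ℕ → Finset ℕ := fun i => A.filter (fun n => s * (1 + θ) ^ i ≤ ‖c n f‖) with hBdef
    have hBsub : ∀ i, B i ⊆ A := fun i => Finset.filter_subset _ _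
    have hBmem : ∀ n ∈ A, ∀ i : ℕ, (n ∈ B i ↔ i ≤ jn n) := by
      intro n hn i
      rw [hBdef]
      simp only [Finset.mem_filter, hn, true_and]
      constructor
      · intro h
        by_contra hlt
        push_neg at hlt
        have hle2 : jn n + 1 ≤ i := hlt
        have hmono : ((1+θ):ℝ) ^ (jn n + 1) ≤ (1+θ) ^ i := pow_le_pow_right₀ h1θ.le hle2
        have hobs := mul_le_mul_of_nonneg_left hmono hs.le
        have := hjhigh n hn
        linarith
      · intro h
        have hmono : ((1+θ):ℝ) ^ i ≤ (1+θ) ^ (jn n) := pow_le_pow_right₀ h1θ.le h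
        have hobs := mul_le_mul_of_nonneg_left hmono hs.le
        have := hjlow n hn
        linarith
    have hBgreedy : ∀ i, GreedySet c f (B i) := by
      intro i n hn m hm
      by_cases hmA : m ∈ A
      · have hm' : ¬ s * (1+θ) ^ i ≤ ‖c m f‖ := by
          intro hcon
          exact hm (by rw [hBdef]; exact Finset.mem_filter.mpr ⟨hmA, hcon⟩)
        push_neg at hm'
        have hn' : s * (1+θ) ^ i ≤ ‖c n f‖ := by
          rw [hBdef] at hn
          exact (Finset.mem_filter.mp hn).2
        linarith
      · exact hGA n (hBsub i hn) m hmA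
    have hprojB : ∀ i, q (proj c e (B i) f) ≤ Cqg := by
      intro i
      calc q (proj c e (B i) f) ≤ Cqg * q f := hqg f (B i) (hBgreedy i)
        _ ≤ Cqg * 1 := mul_le_mul_of_nonneg_left hf1 hC0.le
        _ = Cqg := mul_one _
    have hprojA : q (proj c e A f) ≤ Cqg := by
      calc q (proj c e A f) ≤ Cqg * q f := hqg f A hGA
        _ ≤ Cqg * 1 := mul_le_mul_of_nonneg_left hf1 hC0.le
        _ = Cqg := mul_one _
    set J := A.sup jn with hJdef
    have hjJ : ∀ n ∈ A, jn n ≤ J := fun n hn => Finset.le_sup hn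
    have hgeo : ∀ m : ℕ, ∑ i ∈ Finset.range m, θ * δ ^ (i + 1) = 1 - δ ^ m := by
      intro m
      induction m with
      | zero => simp
      | succ m ihm =>
          rw [Finset.sum_range_succ, ihm]
          have hstep : θ * δ ^ (m + 1) = δ ^ m - δ ^ (m + 1) := by
            have h := hδθ
            have : δ ^ m * ((1 + θ) * δ) = δ ^ m * 1 := by rw [h]
            ring_nf at this ⊢
            linarith [this]
          linarith [hstep]
    -- the vector W
    set W : X := ∑ i ∈ Finset.range J, ((θ * δ ^ (i + 1) : ℝ) : 𝕜) • proj c e (B (i + 1)) f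
      with hWdef
    have hWalt : W = ∑ n ∈ A, ((1 - δ ^ jn n : ℝ) : 𝕜) • (c n f • e n) := by
      rw [hWdef]
      have step1 : ∀ i ∈ Finset.range J,
          ((θ * δ ^ (i + 1) : ℝ) : 𝕜) • proj c e (B (i + 1)) f
          = ∑ n ∈ A, (if n ∈ B (i + 1) then ((θ * δ ^ (i + 1) : ℝ) : 𝕜) • (c n f • e n) else 0) := by
        intro i _
        rw [Finset.sum_ite_mem, Finset.inter_eq_right.mpr (hBsub (i + 1)), proj,
          Finset.smul_sum]
      rw [Finset.sum_congr rfl step1, Finset.sum_comm]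
      refine Finset.sum_congr rfl fun n hn => ?_
      have step2 : ∀ i ∈ Finset.range J,
          (if n ∈ B (i + 1) then ((θ * δ ^ (i + 1) : ℝ) : 𝕜) • (c n f • e n) else 0)
          = (if i + 1 ≤ jn n then ((θ * δ ^ (i + 1) : ℝ) : 𝕜) else 0) • (c n f • e n) := by
        intro i _
        by_cases h : n ∈ B (i + 1)
        · rw [if_pos h, if_pos ((hBmem n hn (i + 1)).mp h)]
        · rw [if_neg h, if_neg (fun hc => h ((hBmem n hn (i + 1)).mpr hc)), zero_smul]
      rw [Finset.sum_congr rfl step2, ← Finset.sum_smul]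
      congr 1
      have step3 : ∀ i ∈ Finset.range J,
          (if i + 1 ≤ jn n then ((θ * δ ^ (i + 1) : ℝ) : 𝕜) else 0)
          = (((if i + 1 ≤ jn n then (θ * δ ^ (i + 1)) else 0 : ℝ)) : 𝕜) := by
        intro i _
        by_cases h : i + 1 ≤ jn n
        · rw [if_pos h, if_pos h]
        · rw [if_neg h, if_neg h, RCLike.ofReal_zero]
      rw [Finset.sum_congr rfl step3, ← RCLike.ofReal_sum]
      have hfil : ∑ i ∈ Finset.range J, (if i + 1 ≤ jn n then (θ * δ ^ (i + 1)) else 0)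
          = ∑ i ∈ Finset.range (jn n), θ * δ ^ (i + 1) := by
        rw [← Finset.sum_filter]
        congr 1
        ext i
        simp only [Finset.mem_filter, Finset.mem_range]
        have := hjJ n hn
        omega
      rw [hfil, hgeo (jn n)]
    -- the vector R
    set R : X := ∑ n ∈ A, ((δ ^ jn n * ‖c n f‖ - s : ℝ) : 𝕜) • (sgn 𝕜 (c n f) • e n) with hRdef
    have hRco : ∀ n ∈ A, 0 ≤ δ ^ jn n * ‖c n f‖ - s ∧ δ ^ jn n * ‖c n f‖ - s ≤ s * θ := by
      intro n hn
      have h1 := hjlow n hn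
      have h2 := hjhigh n hn
      have hδpow : δ ^ jn n * (1 + θ) ^ jn n = 1 := by
        rw [← mul_pow]
        rw [show δ * (1 + θ) = 1 by rw [mul_comm]; exact hδθ]
        exact one_pow _
      have hpow0 : (0:ℝ) < δ ^ jn n := pow_pos hδ0 _
      constructor
      · have h5 := mul_le_mul_of_nonneg_right h1 hpow0.le
        rw [mul_assoc, mul_comm ((1+θ) ^ jn n) (δ ^ jn n), hδpow, mul_one] at h5
        linarith
      · have h3 : ‖c n f‖ * δ ^ jn n < s * (1 + θ) ^ (jn n + 1) * δ ^ jn n :=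
          mul_lt_mul_of_pos_right h2 hpow0
        have h4 : s * (1 + θ) ^ (jn n + 1) * δ ^ jn n = s * (1 + θ) := by
          rw [pow_succ]
          linear_combination (s * (1 + θ)) * hδpow
        linarith
    -- the key identity
    have hI1 : restrTrunc e c f A = proj c e A f - W - R := by
      rw [restrTrunc, ← hsdef, Finset.smul_sum, proj, hWalt, hRdef,
        ← Finset.sum_sub_distrib, ← Finset.sum_sub_distrib]
      refine Finset.sum_congr rfl fun n hn => ?_
      have hce : c n f • e n = ((‖c n f‖ : ℝ) : 𝕜) • (sgn 𝕜 (c n f) • e n) := by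
        rw [← mul_smul, ofReal_norm_mul_sgn]
      rw [hce]
      simp only [smul_smul]
      rw [← sub_smul, ← sub_smul]
      congr 1
      push_cast
      ring
    -- norm bound on W
    set Φ := q (∑ n ∈ A, sgn 𝕜 (c n f) • e n) with hΦdef
    have hΦ0 : 0 ≤ Φ := q_nonneg q hq _
    have hUq : q (restrTrunc e c f A) = s * Φ := by
      rw [restrTrunc, ← hsdef, q_smul_real q hq hs.le, hΦdef]
    have hWq : q W ^ p ≤ Cqg ^ p * (θ ^ p * (Dp / (1 - Dp))) := by
      have h1 : q W ^ p ≤ ∑ i ∈ Finset.range J,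
          q (((θ * δ ^ (i + 1) : ℝ) : 𝕜) • proj c e (B (i + 1)) f) ^ p := by
        rw [hWdef]
        exact q_sum_le q hp hq _ _
      have h2 : ∀ i ∈ Finset.range J,
          q (((θ * δ ^ (i + 1) : ℝ) : 𝕜) • proj c e (B (i + 1)) f) ^ p
          ≤ Cqg ^ p * (θ ^ p * Dp ^ (i + 1)) := by
        intro i _
        have hco : (0:ℝ) ≤ θ * δ ^ (i + 1) := by positivity
        rw [q_smul_real q hq hco]
        have hqe : q (proj c e (B (i+1)) f) ≤ Cqg := hprojB (i + 1)
        have hqe0 : 0 ≤ q (proj c e (B (i+1)) f) := q_nonneg q hq _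
        calc (θ * δ ^ (i + 1) * q (proj c e (B (i+1)) f)) ^ p
            ≤ (θ * δ ^ (i + 1) * Cqg) ^ p := by
              apply Real.rpow_le_rpow (by positivity) _ hp.le
              exact mul_le_mul_of_nonneg_left hqe hco
          _ = Cqg ^ p * (θ ^ p * Dp ^ (i + 1)) := by
              rw [Real.mul_rpow hco hC0.le, Real.mul_rpow hθ0.le (by positivity),
                pow_rpow_comm hδ0.le, hδp]
              ring
      have h3 : ∑ i ∈ Finset.range J, Cqg ^ p * (θ ^ p * Dp ^ (i + 1))
          ≤ Cqg ^ p * (θ ^ p * (Dp / (1 - Dp))) := by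
        rw [← Finset.mul_sum, ← Finset.mul_sum]
        have := geom_tail hDp0.le hDp1 J
        have hθp0 : (0:ℝ) ≤ θ ^ p := Real.rpow_nonneg hθ0.le _
        have hCp0 : (0:ℝ) ≤ Cqg ^ p := Real.rpow_nonneg hC0.le _
        apply mul_le_mul_of_nonneg_left _ hCp0
        exact mul_le_mul_of_nonneg_left this hθp0
      calc q W ^ p ≤ ∑ i ∈ Finset.range J,
            q (((θ * δ ^ (i + 1) : ℝ) : 𝕜) • proj c e (B (i + 1)) f) ^ p := h1
        _ ≤ ∑ i ∈ Finset.range J, Cqg ^ p * (θ ^ p * Dp ^ (i + 1)) := Finset.sum_le_sum h2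
        _ ≤ Cqg ^ p * (θ ^ p * (Dp / (1 - Dp))) := h3
    -- norm bound on R
    have hXi : ∀ F ⊆ A, q (∑ n ∈ F, sgn 𝕜 (c n f) • e n) ≤ Cqg * Φ := by
      intro F hF
      rw [hΦdef]
      exact indicator_subset_bound q e c hp hq hb hqg hC hF (fun n _ => norm_sgn (c n f))
    have hRq : q R ^ p ≤ Tp * (s * Φ) ^ p := by
      have hmb := multiplier_bound q e hp hq hM hXi (fun n _ => norm_sgn (c n f))
        (mul_nonneg hs.le hθ0.le) hRco
      rw [← hRdef] at hmb
      refine le_trans hmb ?_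
      have hCΦ : (Cqg * Φ) ^ p = Cqg ^ p * Φ ^ p := Real.mul_rpow hC0.le hΦ0
      have hsθ : (s * θ) ^ p = s ^ p * θ ^ p := Real.mul_rpow hs.le hθ0.le
      have hsΦ : (s * Φ) ^ p = s ^ p * Φ ^ p := Real.mul_rpow hs.le hΦ0
      have hθp : θ ^ p = ((2:ℝ) ^ p - 1) * (Cqg ^ p)⁻¹ * Tp := by
        rw [hθdef, Real.mul_rpow (by positivity) ht0.le,
          Real.mul_rpow (by positivity) (by positivity),
          Real.inv_rpow hAp0.le, Real.inv_rpow hC0.le, hApp, inv_inv, hTpdef]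
      rw [hCΦ, hsθ, hsΦ, hθp]
      have hCp0 : (0:ℝ) < Cqg ^ p := Real.rpow_pos_of_pos hC0 _
      have heq : s ^ p * (((2:ℝ) ^ p - 1) * (Cqg ^ p)⁻¹ * Tp) * ((2:ℝ) ^ p - 1)⁻¹
          * (Cqg ^ p * Φ ^ p) = Tp * (s ^ p * Φ ^ p) := by
        field_simp
      rw [heq]
    -- main chain for y = s * Φ
    have hmain : (s * Φ) ^ p ≤ Cqg ^ p + Cqg ^ p * (θ ^ p * (Dp / (1 - Dp)))
        + Tp * (s * Φ) ^ p := by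
      have h1 : q (restrTrunc e c f A) ^ p ≤ q (proj c e A f - W) ^ p + q R ^ p := by
        rw [hI1]
        exact q_sub_le q hp hq _ _
      have h2 : q (proj c e A f - W) ^ p ≤ q (proj c e A f) ^ p + q W ^ p :=
        q_sub_le q hp hq _ _
      have h3 : q (proj c e A f) ^ p ≤ Cqg ^ p :=
        Real.rpow_le_rpow (q_nonneg q hq _) hprojA hp.le
      rw [hUq] at h1
      linarith
    have habs : (s * Φ) ^ p ≤ Cqg ^ p * ((1 - Tp)⁻¹ * (1 - Dp)⁻¹) := by
      have hθp1 : θ ^ p ≤ 1 := Real.rpow_le_one hθ0.le hθ1.le hp.le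
      have hCp0 : (0:ℝ) < Cqg ^ p := Real.rpow_pos_of_pos hC0 _
      have hbr : 1 + θ ^ p * (Dp / (1 - Dp)) ≤ (1 - Dp)⁻¹ := by
        rw [div_eq_mul_inv]
        rw [← sub_nonneg]
        have hexp2 : (1 - Dp)⁻¹ - (1 + θ ^ p * (Dp * (1 - Dp)⁻¹))
            = (1 - (1 - Dp) - θ ^ p * Dp) * (1 - Dp)⁻¹ := by
          field_simp
          ring
        rw [hexp2]
        have hθp0 : (0:ℝ) ≤ θ ^ p := Real.rpow_nonneg hθ0.le _
        have hpr : 0 ≤ (1 - θ ^ p) * Dp := mul_nonneg (by linarith) hDp0.le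
        have hnn : 0 ≤ 1 - (1 - Dp) - θ ^ p * Dp := by linarith [hpr]
        positivity
      have h1 : (s * Φ) ^ p * (1 - Tp) ≤ Cqg ^ p * (1 + θ ^ p * (Dp / (1 - Dp))) := by
        linarith [hmain]
      have h2 : (s * Φ) ^ p * (1 - Tp) ≤ Cqg ^ p * (1 - Dp)⁻¹ := by
        refine le_trans h1 ?_
        exact mul_le_mul_of_nonneg_left hbr hCp0.le
      rw [show Cqg ^ p * ((1 - Tp)⁻¹ * (1 - Dp)⁻¹) = (Cqg ^ p * (1 - Dp)⁻¹) * (1 - Tp)⁻¹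
        by ring]
      have h3 : (s * Φ) ^ p ≤ Cqg ^ p * (1 - Dp)⁻¹ / (1 - Tp) := (le_div_iff₀ h1T).mpr h2
      rw [div_eq_mul_inv] at h3
      exact h3
    have hyH : s * Φ ≤ Cqg * H := by
      refine rpow_le_rpow_rev hp (mul_nonneg hs.le hΦ0) (by positivity) ?_
      rw [Real.mul_rpow hC0.le hH0.le, hHp]
      exact habs
    constructor
    · rw [hUq]
      exact hyH
    · have hVR : proj c e A f - restrTrunc e c f A = W + R := by
        rw [hI1]
        abel
      have hq2 : q (proj c e A f - restrTrunc e c f A) ^ p ≤ q W ^ p + q R ^ p := by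
        rw [hVR]
        exact hq.ptri W R
      have hyp : (s * Φ) ^ p ≤ Cqg ^ p * ((1 - Tp)⁻¹ * (1 - Dp)⁻¹) := habs
      have hRq2 : q R ^ p ≤ Tp * (Cqg ^ p * ((1 - Tp)⁻¹ * (1 - Dp)⁻¹)) := by
        refine le_trans hRq ?_
        exact mul_le_mul_of_nonneg_left hyp hTp0.le
      have hkey2 : Cqg ^ p * (θ ^ p * (Dp / (1 - Dp)))
          + Tp * (Cqg ^ p * ((1 - Tp)⁻¹ * (1 - Dp)⁻¹))
          ≤ (Cqg * Cqg) ^ p * ((1 - Tp)⁻¹ * (1 - Dp)⁻¹) := by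
        have hCp1 : 1 ≤ Cqg ^ p := by
          calc (1:ℝ) = 1 ^ p := (Real.one_rpow p).symm
          _ ≤ Cqg ^ p := Real.rpow_le_rpow zero_le_one hC hp.le
        have hCCp : (Cqg * Cqg) ^ p = Cqg ^ p * Cqg ^ p := Real.mul_rpow hC0.le hC0.le
        have hθTp : θ ^ p ≤ Tp := by
          rw [hTpdef]
          exact Real.rpow_le_rpow hθ0.le hθt hp.le
        have hθp0 : (0:ℝ) ≤ θ ^ p := Real.rpow_nonneg hθ0.le _
        have hCp0 : (0:ℝ) < Cqg ^ p := Real.rpow_pos_of_pos hC0 _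
        have core : θ ^ p * Dp * (1 - Tp) + Tp ≤ Cqg ^ p := by
          have hint1 : 0 ≤ (Tp - θ ^ p) * Dp * (1 - Tp) :=
            mul_nonneg (mul_nonneg (by linarith) hDp0.le) h1T.le
          have hint2 : 0 ≤ Tp * (1 - Dp) * (1 - Tp) :=
            mul_nonneg (mul_nonneg hTp0.le (by linarith)) h1T.le
          linarith [hint1, hint2, sq_nonneg (1 - Tp)]
        rw [← sub_nonneg]
        have hexp3 : (Cqg * Cqg) ^ p * ((1 - Tp)⁻¹ * (1 - Dp)⁻¹)
            - (Cqg ^ p * (θ ^ p * (Dp / (1 - Dp)))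
              + Tp * (Cqg ^ p * ((1 - Tp)⁻¹ * (1 - Dp)⁻¹)))
            = (Cqg ^ p * (Cqg ^ p - (θ ^ p * Dp * (1 - Tp) + Tp)))
              * ((1 - Tp)⁻¹ * (1 - Dp)⁻¹) := by
          rw [hCCp]
          field_simp
        rw [hexp3]
        have hpos1 : 0 ≤ Cqg ^ p * (Cqg ^ p - (θ ^ p * Dp * (1 - Tp) + Tp)) :=
          mul_nonneg hCp0.le (by linarith [core])
        positivity
      have final : q (proj c e A f - restrTrunc e c f A) ^ p ≤ (Cqg * Cqg * H) ^ p := by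
        have hCCH : (Cqg * Cqg * H) ^ p = (Cqg * Cqg) ^ p * ((1 - Tp)⁻¹ * (1 - Dp)⁻¹) := by
          rw [Real.mul_rpow (by positivity) hH0.le, hHp]
        rw [hCCH]
        calc q (proj c e A f - restrTrunc e c f A) ^ p ≤ q W ^ p + q R ^ p := hq2
          _ ≤ Cqg ^ p * (θ ^ p * (Dp / (1 - Dp)))
              + Tp * (Cqg ^ p * ((1 - Tp)⁻¹ * (1 - Dp)⁻¹)) := by linarith
          _ ≤ (Cqg * Cqg) ^ p * ((1 - Tp)⁻¹ * (1 - Dp)⁻¹) := hkey2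
      exact rpow_le_rpow_rev hp (q_nonneg q hq _) (by positivity) final

end Stmt19Aux

/-- for a `C_qg`-quasi-greedy basis of a `p`-Banach space, the
restricted truncation operator is bounded by `C_qg² η_p(C_qg)` and the truncation
operator by `C_qg (1 + C_qg^p η_p(C_qg)^p)^{1/p}` on the unit ball. -/
theorem stmt19 (p : ℝ) (hp : 0 < p) (hp1 : p ≤ 1)
    (hq : IsPNorm 𝕜 p q) (hb : IsBasis q e c)
    (Cqg : ℝ) (hqg : QuasiGreedy q e c Cqg) :
    (∀ (f : X) (A : Finset ℕ), GreedySet c f A → q f ≤ 1 →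
        q (restrTrunc e c f A) ≤ Cqg ^ 2 * eta p Cqg) ∧
    (∀ (f : X) (A : Finset ℕ), GreedySet c f A → q f ≤ 1 →
        q (trunc e c f A) ≤ Cqg * (1 + Cqg ^ p * eta p Cqg ^ p) ^ (1 / p)) := by
  have hC : 1 ≤ Cqg := one_le_Cqg q e c hp hq hb hqg
  have hC0 : (0:ℝ) < Cqg := lt_of_lt_of_le one_pos hC
  set G : ℝ → ℝ := fun t : ℝ => (1 - t ^ p) ^ (-1 / p) *
    (1 - (1 + (Ap p)⁻¹ * Cqg⁻¹ * t) ^ (-p)) ^ (-1 / p) with hG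
  have hne : (G '' Set.Ioo (0 : ℝ) 1).Nonempty :=
    ⟨G (1/2), ⟨(1:ℝ)/2, by norm_num, rfl⟩⟩
  have hetaG : eta p Cqg = sInf (G '' Set.Ioo (0 : ℝ) 1) := by rw [eta, hG]
  have heta1 : 1 ≤ eta p Cqg := by
    rw [hetaG]
    refine le_csInf hne ?_
    rintro b ⟨t, ⟨ht0, ht1⟩, rfl⟩
    have hexp : -1 / p ≤ 0 := by
      rw [neg_div]
      exact neg_nonpos_of_nonneg (by positivity)
    have h2p : (1:ℝ) < 2 ^ p := by
      calc (1:ℝ) = 1 ^ p := (Real.one_rpow p).symm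
      _ < 2 ^ p := Real.rpow_lt_rpow (by norm_num) (by norm_num) hp
    have h2p0 : (0:ℝ) < 2 ^ p - 1 := by linarith
    have hAp0 : 0 < Ap p := Real.rpow_pos_of_pos h2p0 _
    have hθ0 : 0 < (Ap p)⁻¹ * Cqg⁻¹ * t := by positivity
    have hTp1 : t ^ p < 1 := Real.rpow_lt_one ht0.le ht1 hp
    have hTp0 : 0 < t ^ p := Real.rpow_pos_of_pos ht0 _
    have hDp1 : (1 + (Ap p)⁻¹ * Cqg⁻¹ * t) ^ (-p) < 1 :=
      Real.rpow_lt_one_of_one_lt_of_neg (by linarith) (by linarith)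
    have hDp0 : 0 < (1 + (Ap p)⁻¹ * Cqg⁻¹ * t) ^ (-p) :=
      Real.rpow_pos_of_pos (by linarith) _
    have a1 : 1 ≤ (1 - t ^ p) ^ (-1 / p) :=
      Real.one_le_rpow_of_pos_of_le_one_of_nonpos (by linarith) (by linarith) hexp
    have a2 : 1 ≤ (1 - (1 + (Ap p)⁻¹ * Cqg⁻¹ * t) ^ (-p)) ^ (-1 / p) :=
      Real.one_le_rpow_of_pos_of_le_one_of_nonpos (by linarith) (by linarith) hexp
    simp only [hG]
    calc (1:ℝ) = 1 * 1 := by norm_num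
      _ ≤ (1 - t ^ p) ^ (-1 / p) * (1 - (1 + (Ap p)⁻¹ * Cqg⁻¹ * t) ^ (-p)) ^ (-1 / p) :=
          mul_le_mul a1 a2 zero_le_one (le_trans zero_le_one a1)
  have heta0 : 0 ≤ eta p Cqg := by linarith
  constructor
  · intro f A hGA hf1
    have h1 : q (restrTrunc e c f A) ≤ Cqg * eta p Cqg := by
      rw [hetaG]
      have hdiv : q (restrTrunc e c f A) / Cqg ≤ sInf (G '' Set.Ioo (0 : ℝ) 1) := by
        refine le_csInf hne ?_
        rintro b ⟨t, ⟨ht0, ht1⟩, rfl⟩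
        rw [div_le_iff₀ hC0, mul_comm]
        exact (per_t q e c hp hp1 hq hb hqg hC f A hGA hf1 ht0 ht1).1
      rw [div_le_iff₀ hC0] at hdiv
      rw [mul_comm]
      exact hdiv
    calc q (restrTrunc e c f A) ≤ Cqg * eta p Cqg := h1
      _ ≤ Cqg ^ 2 * eta p Cqg := by
          rw [pow_two]
          nlinarith [mul_nonneg (mul_nonneg hC0.le heta0) (sub_nonneg.mpr hC)]
  · intro f A hGA hf1
    have hv : q (proj c e A f - restrTrunc e c f A) ≤ Cqg * Cqg * eta p Cqg := by
      rw [hetaG]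
      have hCC0 : (0:ℝ) < Cqg * Cqg := by positivity
      have hdiv : q (proj c e A f - restrTrunc e c f A) / (Cqg * Cqg)
          ≤ sInf (G '' Set.Ioo (0 : ℝ) 1) := by
        refine le_csInf hne ?_
        rintro b ⟨t, ⟨ht0, ht1⟩, rfl⟩
        rw [div_le_iff₀ hCC0, mul_comm]
        exact (per_t q e c hp hp1 hq hb hqg hC f A hGA hf1 ht0 ht1).2
      rw [div_le_iff₀ hCC0] at hdiv
      rw [mul_comm]
      exact hdiv
    have htr : trunc e c f A = f - (proj c e A f - restrTrunc e c f A) := by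
      rw [trunc]
      abel
    have hqf : q f ^ p ≤ 1 := by
      calc q f ^ p ≤ 1 ^ p := Real.rpow_le_rpow (q_nonneg q hq f) hf1 hp.le
        _ = 1 := Real.one_rpow p
    have h2 : q (trunc e c f A) ^ p ≤ 1 + (Cqg * Cqg * eta p Cqg) ^ p := by
      rw [htr]
      refine le_trans (q_sub_le q hp hq f _) ?_
      have h3 : q (proj c e A f - restrTrunc e c f A) ^ p ≤ (Cqg * Cqg * eta p Cqg) ^ p :=
        Real.rpow_le_rpow (q_nonneg q hq _) hv hp.le
      linarith
    have hCp1 : 1 ≤ Cqg ^ p := by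
      calc (1:ℝ) = 1 ^ p := (Real.one_rpow p).symm
      _ ≤ Cqg ^ p := Real.rpow_le_rpow zero_le_one hC hp.le
    have hetap0 : 0 ≤ eta p Cqg ^ p := Real.rpow_nonneg heta0 _
    have hb0 : (0:ℝ) ≤ 1 + Cqg ^ p * eta p Cqg ^ p := by
      have := mul_nonneg (Real.rpow_nonneg hC0.le p) hetap0
      linarith
    have hCCη : (Cqg * Cqg * eta p Cqg) ^ p = Cqg ^ p * (Cqg ^ p * eta p Cqg ^ p) := by
      rw [Real.mul_rpow (by positivity) heta0, Real.mul_rpow hC0.le hC0.le]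
      ring
    have hRHS : (Cqg * (1 + Cqg ^ p * eta p Cqg ^ p) ^ (1 / p)) ^ p
        = Cqg ^ p * (1 + Cqg ^ p * eta p Cqg ^ p) := by
      rw [Real.mul_rpow hC0.le (Real.rpow_nonneg hb0 _), ← Real.rpow_mul hb0,
        one_div, inv_mul_cancel₀ hp.ne', Real.rpow_one]
    have h4 : q (trunc e c f A) ^ p ≤ (Cqg * (1 + Cqg ^ p * eta p Cqg ^ p) ^ (1 / p)) ^ p := by
      rw [hRHS]
      rw [hCCη] at h2
      have := mul_nonneg (Real.rpow_nonneg hC0.le p) hetap0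
      nlinarith [h2, hCp1]
    refine rpow_le_rpow_rev hp (q_nonneg q hq _) ?_ h4
    exact mul_nonneg hC0.le (Real.rpow_nonneg hb0 _)

end GreedyQB
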